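/- For every ε > 0, the set D_ε = {x ∈ X : there exists an open neighborhood U of x such that |f(y) − f(z)| < ε for all y, z ∈ U} is open and dense in X. (This is the key fact, used in the proof of Proposition 1, that for a non-negative upper semicontinuous function the set of points with small local oscillation is open and dense, even when the ambient space is not a Baire space.) -/
import Mathlib


/-- For a non-negative upper semicontinuous function `f : X → ℝ` on a topological
space `X` and every `ε > 0`, the set of points having an open neighborhood on which
the oscillation of `f` is less than `ε` is open and dense in `X`. -/
theorem usc_small_oscillation_open_dense {X : Type*} [TopologicalSpace X]
    (f : X → ℝ) (hf : UpperSemicontinuous f) (hf0 : ∀ x, 0 ≤ f x)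
    (ε : ℝ) (hε : 0 < ε) :
    IsOpen {x : X | ∃ U : Set X, IsOpen U ∧ x ∈ U ∧
        ∀ y ∈ U, ∀ z ∈ U, |f y - f z| < ε} ∧
    Dense {x : X | ∃ U : Set X, IsOpen U ∧ x ∈ U ∧
        ∀ y ∈ U, ∀ z ∈ U, |f y - f z| < ε} := by
  constructor
  · -- openness
    rw [isOpen_iff_forall_mem_open]
    rintro x ⟨U, hU, hxU, hosc⟩
    exact ⟨U, fun y hy => ⟨U, hU, hy, hosc⟩, hU, hxU⟩
  · -- density
    rw [dense_iff_inter_open]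
    rintro V hV ⟨v, hv⟩
    set c := sInf (f '' V) with hc
    have hbdd : BddBelow (f '' V) := ⟨0, by rintro _ ⟨y, -, rfl⟩; exact hf0 y⟩
    have hne : (f '' V).Nonempty := ⟨f v, v, hv, rfl⟩
    obtain ⟨_, ⟨x, hxV, rfl⟩, hxlt⟩ :
        ∃ a ∈ f '' V, a < c + ε / 2 := by
      apply Real.lt_sInf_add_pos hne (by linarith)
    have := hf x (c + ε / 2) hxlt
    obtain ⟨W, hWsub, hWopen, hxW⟩ := eventually_nhds_iff.mp this
    refine ⟨x, hxV, W ∩ V, hWopen.inter hV, ⟨hxW, hxV⟩, ?_⟩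
    rintro y ⟨hyW, hyV⟩ z ⟨hzW, hzV⟩
    have hyc : c ≤ f y := csInf_le hbdd ⟨y, hyV, rfl⟩
    have hzc : c ≤ f z := csInf_le hbdd ⟨z, hzV, rfl⟩
    have hy2 := hWsub y hyW
    have hz2 := hWsub z hzW
    rw [abs_lt]
    constructor <;> linarith
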